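/- Let G be a Cohen–Macaulay chordal graph (over some field) with maximal cliques F₁,…,F_m having a free vertex, and let wᵢ be a free vertex of Fᵢ. Assume V(G) is the disjoint union of F₁,…,F_m. Then G equals the clique-whiskered graph (G − {w₁,…,w_m})^π, where π = {Fᵢ \ {wᵢ} : 1 ≤ i ≤ m}. -/

import Mathlib

/-!
Each vertex `v` lies in exactly one clique `F (p v)`, and `F i` is the closed neighbourhood of
the free vertex `w i`. Hence `v ≠ w i` is adjacent to `w i` iff `p v = i`, which is exactly the
whisker edge `{v, wᵢ}`, and two free vertices are never adjacent (else they would share a clique).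
So the free vertices play the role of the whiskers of `G - {w₁, …, w_m}` with respect to `p`.
-/

def cliqueWhisker {V ι : Type*} (G : SimpleGraph V) (p : V → ι) :
    SimpleGraph (V ⊕ ι) :=
  SimpleGraph.fromRel (fun a b =>
    match a, b with
    | Sum.inl u, Sum.inl v => G.Adj u v
    | Sum.inl u, Sum.inr i => p u = i
    | _, _ => False)

def whiskerGraph {V : Type*} (G : SimpleGraph V) : SimpleGraph (V ⊕ V) :=
  SimpleGraph.fromRel (fun a b =>
    match a, b with
    | Sum.inl u, Sum.inl v => G.Adj u v
    | Sum.inl u, Sum.inr w => u = w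
    | _, _ => False)

def IsVertexCover {V : Type*} (G : SimpleGraph V) (C : Set V) : Prop :=
  ∀ ⦃u v : V⦄, G.Adj u v → u ∈ C ∨ v ∈ C

def IsMinVertexCover {V : Type*} (G : SimpleGraph V) (C : Set V) : Prop :=
  IsVertexCover G C ∧ ∀ D ⊆ C, IsVertexCover G D → D = C

def IsIndep {V : Type*} (G : SimpleGraph V) (A : Set V) : Prop :=
  ∀ u ∈ A, ∀ v ∈ A, ¬ G.Adj u v

section CliqueWhisker

variable {V ι : Type*} {G : SimpleGraph V} {p : V → ι}

@[simp]
theorem cliqueWhisker_adj_inl_inl {u v : V} :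
    (cliqueWhisker G p).Adj (Sum.inl u) (Sum.inl v) ↔ G.Adj u v := by
  simp only [cliqueWhisker, SimpleGraph.fromRel_adj, ne_eq, Sum.inl.injEq]
  exact ⟨fun ⟨_, h⟩ => h.elim id G.adj_symm, fun h => ⟨G.ne_of_adj h, Or.inl h⟩⟩

@[simp]
theorem cliqueWhisker_adj_inl_inr {u : V} {i : ι} :
    (cliqueWhisker G p).Adj (Sum.inl u) (Sum.inr i) ↔ p u = i := by
  simp [cliqueWhisker]

@[simp]
theorem cliqueWhisker_adj_inr_inl {u : V} {i : ι} :
    (cliqueWhisker G p).Adj (Sum.inr i) (Sum.inl u) ↔ p u = i := by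
  simp [cliqueWhisker]

@[simp]
theorem cliqueWhisker_not_adj_inr_inr {i j : ι} :
    ¬ (cliqueWhisker G p).Adj (Sum.inr i) (Sum.inr j) := by
  simp [cliqueWhisker]

end CliqueWhisker

theorem sumElim_val_bijective_of_injective {V ι : Type*} {w : ι → V}
    (hw : Function.Injective w) :
    Function.Bijective (Sum.elim Subtype.val w : ↥{v : V | ∀ i, v ≠ w i} ⊕ ι → V) := by
  refine ⟨Subtype.val_injective.sumElim hw fun v i => v.2 i, fun v => ?_⟩
  by_cases hv : ∀ i, v ≠ w i
  · exact ⟨Sum.inl ⟨v, hv⟩, rfl⟩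
  · obtain ⟨i, rfl⟩ := not_forall_not.mp hv
    exact ⟨Sum.inr i, rfl⟩

section FreeVertices

variable {V ι : Type*} {G : SimpleGraph V} {F : ι → Set V} {w : ι → V} {p : V → ι}

theorem index_free_vertex (hpart : ∀ v i, v ∈ F i ↔ p v = i)
    (hfree : ∀ i v, v ∈ F i ↔ (G.Adj (w i) v ∨ v = w i)) (i : ι) : p (w i) = i :=
  (hpart _ _).1 ((hfree i (w i)).2 (Or.inr rfl))

theorem free_vertex_injective (hpart : ∀ v i, v ∈ F i ↔ p v = i)
    (hfree : ∀ i v, v ∈ F i ↔ (G.Adj (w i) v ∨ v = w i)) : Function.Injective w :=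
  fun i j h => by
    rw [← index_free_vertex hpart hfree i, ← index_free_vertex hpart hfree j, h]

theorem not_adj_free_vertices (hpart : ∀ v i, v ∈ F i ↔ p v = i)
    (hfree : ∀ i v, v ∈ F i ↔ (G.Adj (w i) v ∨ v = w i)) (i j : ι) :
    ¬ G.Adj (w i) (w j) := by
  intro hadj
  have hij : i = j :=
    ((hpart _ _).1 ((hfree i (w j)).2 (Or.inl hadj))).symm.trans
      (index_free_vertex hpart hfree j)
  subst hij
  exact G.irrefl hadj

theorem adj_free_vertex_iff (hpart : ∀ v i, v ∈ F i ↔ p v = i)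
    (hfree : ∀ i v, v ∈ F i ↔ (G.Adj (w i) v ∨ v = w i)) {u : V} {i : ι} (hu : u ≠ w i) :
    G.Adj u (w i) ↔ p u = i := by
  rw [← hpart, hfree, G.adj_comm, or_iff_left hu]

end FreeVertices

theorem stmt8_general {V : Type*} {m : ℕ}
    (G : SimpleGraph V) (F : Fin m → Set V) (w : Fin m → V) (p : V → Fin m)
    (hpart : ∀ (v : V) (i : Fin m), v ∈ F i ↔ p v = i)
    (hfree : ∀ (i : Fin m) (v : V), v ∈ F i ↔ (G.Adj (w i) v ∨ v = w i)) :
    Function.Bijective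
      (Sum.elim Subtype.val w : ↥{v : V | ∀ i, v ≠ w i} ⊕ Fin m → V) ∧
    ∀ a b : ↥{v : V | ∀ i, v ≠ w i} ⊕ Fin m,
      (cliqueWhisker (SimpleGraph.induce {v : V | ∀ i, v ≠ w i} G)
          (fun v => p v.1)).Adj a b ↔
        G.Adj (Sum.elim Subtype.val w a) (Sum.elim Subtype.val w b) := by
  refine ⟨sumElim_val_bijective_of_injective (free_vertex_injective hpart hfree), ?_⟩
  rintro (⟨u, hu⟩ | i) (⟨v, hv⟩ | j)
  · simp
  · simpa using (adj_free_vertex_iff hpart hfree (hu j)).symm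
  · simpa [G.adj_comm] using (adj_free_vertex_iff hpart hfree (hv i)).symm
  · simpa using not_adj_free_vertices hpart hfree i j

theorem stmt8 {V : Type*} [Fintype V] [DecidableEq V] {m : ℕ}
    (G : SimpleGraph V) (F : Fin m → Set V) (w : Fin m → V) (p : V → Fin m)
    (hpart : ∀ (v : V) (i : Fin m), v ∈ F i ↔ p v = i)
    (hclique : ∀ i, ∀ u ∈ F i, ∀ v ∈ F i, u ≠ v → G.Adj u v)
    (hfree : ∀ (i : Fin m) (v : V), v ∈ F i ↔ (G.Adj (w i) v ∨ v = w i)) :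
    Function.Bijective
      (Sum.elim Subtype.val w : ↥{v : V | ∀ i, v ≠ w i} ⊕ Fin m → V) ∧
    ∀ a b : ↥{v : V | ∀ i, v ≠ w i} ⊕ Fin m,
      (cliqueWhisker (SimpleGraph.induce {v : V | ∀ i, v ≠ w i} G)
          (fun v => p v.1)).Adj a b ↔
        G.Adj (Sum.elim Subtype.val w a) (Sum.elim Subtype.val w b) :=
  stmt8_general G F w p hpart hfree
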